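/- arXiv:1706.00475 — 5 statements merged into one kernel-verified Lean document; each statement's English description precedes it below -/
import Mathlib

section
/- Let Λ be an artin algebra and Q̃ the direct sum of all indecomposable projective-injective Λ-modules up to isomorphism. If P is a projective module lying in C_Λ = Gen(Q̃) ∩ Cogen(Q̃), then P is injective. Dually, if I is an injective module lying in C_Λ, then I is projective. -/
open Function LinearMap

section Prelim

variable (Λ : Type) [Ring Λ]

/-- A module that is both projective and injective. -/
def IsProjInj (M : Type) [AddCommGroup M] [Module Λ M] : Prop :=
  Module.Projective Λ M ∧ Module.Injective Λ M

/-- `X` is generated by the projective-injective modules: it is a quotient of a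
finitely generated projective-injective module (equivalently, of a finite direct sum of
copies of `Q̃`). -/
def GenByProjInj (X : Type) [AddCommGroup X] [Module Λ X] : Prop :=
  ∃ Q : ModuleCat.{0} Λ, Module.Finite Λ Q ∧ IsProjInj Λ Q ∧
    ∃ f : Q →ₗ[Λ] X, Surjective f

/-- `X` is cogenerated by the projective-injective modules: it embeds into a
finitely generated projective-injective module. -/
def CogenByProjInj (X : Type) [AddCommGroup X] [Module Λ X] : Prop :=
  ∃ Q : ModuleCat.{0} Λ, Module.Finite Λ Q ∧ IsProjInj Λ Q ∧
    ∃ f : X →ₗ[Λ] Q, Injective f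

/-- Membership in `C_Λ = Gen(Q̃) ∩ Cogen(Q̃)`. -/
def MemC (X : Type) [AddCommGroup X] [Module Λ X] : Prop :=
  GenByProjInj Λ X ∧ CogenByProjInj Λ X

/-- `pdLEcat Λ n X` : `X` has projective dimension at most `n`. -/
def pdLEcat : ℕ → ModuleCat.{0} Λ → Prop
  | 0, X => Module.Projective Λ X
  | n+1, X => ∃ (P : ModuleCat.{0} Λ) (g : P →ₗ[Λ] X),
      Module.Projective Λ P ∧ Module.Finite Λ P ∧ Surjective g ∧
      pdLEcat n (ModuleCat.of Λ (↥(LinearMap.ker g)))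

/-- Projective dimension at most `n`, for a bare module. -/
def pdLE (n : ℕ) (X : Type) [AddCommGroup X] [Module Λ X] : Prop :=
  pdLEcat Λ n (ModuleCat.of Λ X)

/-- `idLEcat Λ n X` : `X` has injective dimension at most `n`. -/
def idLEcat : ℕ → ModuleCat.{0} Λ → Prop
  | 0, X => Module.Injective Λ X
  | n+1, X => ∃ (I : ModuleCat.{0} Λ) (f : X →ₗ[Λ] I),
      Module.Injective Λ I ∧ Injective f ∧
      idLEcat n (ModuleCat.of Λ (↥I ⧸ LinearMap.range f))

/-- Injective dimension at most `n`, for a bare module. -/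
def idLE (n : ℕ) (X : Type) [AddCommGroup X] [Module Λ X] : Prop :=
  idLEcat Λ n (ModuleCat.of Λ X)

/-- Global dimension at most `d` (on finitely generated modules). -/
def GlobalDimLE (d : ℕ) : Prop :=
  ∀ X : ModuleCat.{0} Λ, Module.Finite Λ X → pdLEcat Λ d X

/-- Global dimension exactly `d`. -/
def GlobalDimEq (d : ℕ) : Prop :=
  GlobalDimLE Λ d ∧ ∀ m, GlobalDimLE Λ m → d ≤ m

/-- `Ext¹_Λ(Y, X) = 0`, expressed by the splitting of all short exact sequences
`0 → X → E → Y → 0`. -/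
def Ext1Vanish (Y X : Type) [AddCommGroup Y] [Module Λ Y]
    [AddCommGroup X] [Module Λ X] : Prop :=
  ∀ (E : ModuleCat.{0} Λ) (f : X →ₗ[Λ] E) (g : E →ₗ[Λ] Y),
    Injective f → Surjective g → LinearMap.range f = LinearMap.ker g →
    ∃ r : E →ₗ[Λ] X, r ∘ₗ f = LinearMap.id

/-- `M` belongs to `add T`: `M` is a direct summand of a finite direct sum of copies of `T`. -/
def InAddOf (T M : Type) [AddCommGroup T] [Module Λ T]
    [AddCommGroup M] [Module Λ M] : Prop :=
  ∃ (m : ℕ) (p : (Fin m → T) →ₗ[Λ] M) (s : M →ₗ[Λ] (Fin m → T)),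
    p ∘ₗ s = LinearMap.id

/-- A (classical) tilting module. -/
def IsTilting (T : Type) [AddCommGroup T] [Module Λ T] : Prop :=
  pdLE Λ 1 T ∧ Ext1Vanish Λ T T ∧
  ∃ (T0 T1 : ModuleCat.{0} Λ) (f : Λ →ₗ[Λ] T0) (g : T0 →ₗ[Λ] T1),
    InAddOf Λ T T0 ∧ InAddOf Λ T T1 ∧ Injective f ∧ Surjective g ∧
    LinearMap.range f = LinearMap.ker g

/-- A (classical) cotilting module. -/
def IsCotilting (T : Type) [AddCommGroup T] [Module Λ T] : Prop :=
  idLE Λ 1 T ∧ Ext1Vanish Λ T T ∧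
  ∀ (I : ModuleCat.{0} Λ), Module.Finite Λ I → Module.Injective Λ I →
    ∃ (C0 C1 : ModuleCat.{0} Λ) (u : C0 →ₗ[Λ] C1) (v : C1 →ₗ[Λ] I),
      InAddOf Λ T C0 ∧ InAddOf Λ T C1 ∧ Injective u ∧ Surjective v ∧
      LinearMap.range u = LinearMap.ker v

/-- Dominant dimension at least `2`: there is an exact sequence `0 → Λ → Q₀ → Q₁`
with `Q₀, Q₁` projective-injective. -/
def DomdimGE2 : Prop :=
  ∃ (Q0 Q1 : ModuleCat.{0} Λ) (f : Λ →ₗ[Λ] Q0) (g : Q0 →ₗ[Λ] Q1),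
    Module.Finite Λ Q0 ∧ IsProjInj Λ Q0 ∧ Module.Finite Λ Q1 ∧ IsProjInj Λ Q1 ∧
    Injective f ∧ LinearMap.range f = LinearMap.ker g

/-- An indecomposable (nonzero) module: the only idempotent endomorphisms are `0` and `id`. -/
def Indecomposable (M : Type) [AddCommGroup M] [Module Λ M] : Prop :=
  (∃ x : M, x ≠ 0) ∧ ∀ e : M →ₗ[Λ] M, e ∘ₗ e = e → e = 0 ∨ e = LinearMap.id

/-- A right minimal morphism. -/
def RightMinimal {B C : Type} [AddCommGroup B] [Module Λ B] [AddCommGroup C] [Module Λ C]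
    (f : B →ₗ[Λ] C) : Prop :=
  ∀ g : B →ₗ[Λ] B, f ∘ₗ g = f → Bijective g

/-- A left minimal morphism. -/
def LeftMinimal {A B : Type} [AddCommGroup A] [Module Λ A] [AddCommGroup B] [Module Λ B]
    (f : A →ₗ[Λ] B) : Prop :=
  ∀ g : B →ₗ[Λ] B, g ∘ₗ f = f → Bijective g

/-- `f : P → X` is a projective cover: `P` is projective, `f` is surjective and its kernel
is superfluous. -/
def IsProjCover {P X : Type} [AddCommGroup P] [Module Λ P] [AddCommGroup X] [Module Λ X]
    (f : P →ₗ[Λ] X) : Prop :=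
  Module.Projective Λ P ∧ Surjective f ∧
    ∀ N : Submodule Λ P, N ⊔ LinearMap.ker f = ⊤ → N = ⊤

/-- `f : X → I` is an injective envelope: `I` is injective, `f` is injective and its image is
essential. -/
def IsInjEnv {X I : Type} [AddCommGroup X] [Module Λ X] [AddCommGroup I] [Module Λ I]
    (f : X →ₗ[Λ] I) : Prop :=
  Module.Injective Λ I ∧ Injective f ∧
    ∀ N : Submodule Λ I, N ⊓ LinearMap.range f = ⊥ → N = ⊥

/-- An essential submodule. -/
def IsEssentialSub {M : Type} [AddCommGroup M] [Module Λ M] (N : Submodule Λ M) : Prop :=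
  ∀ N' : Submodule Λ M, N ⊓ N' = ⊥ → N' = ⊥

/-- A uniserial module: submodules are totally ordered by inclusion. -/
def Uniserial (M : Type) [AddCommGroup M] [Module Λ M] : Prop :=
  ∀ N₁ N₂ : Submodule Λ M, N₁ ≤ N₂ ∨ N₂ ≤ N₁

/-- The radical of a module: the intersection of its maximal submodules. -/
def radSub (M : Type) [AddCommGroup M] [Module Λ M] : Submodule Λ M :=
  sInf {N : Submodule Λ M | IsCoatom N}

/-- An almost split (Auslander-Reiten) sequence `0 → A → E → C → 0`. -/
def IsAlmostSplitSeq {A E C : Type} [AddCommGroup A] [Module Λ A]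
    [AddCommGroup E] [Module Λ E] [AddCommGroup C] [Module Λ C]
    (f : A →ₗ[Λ] E) (g : E →ₗ[Λ] C) : Prop :=
  Injective f ∧ Surjective g ∧ LinearMap.range f = LinearMap.ker g ∧
  (¬∃ r : E →ₗ[Λ] A, r ∘ₗ f = LinearMap.id) ∧
  Indecomposable Λ A ∧ Indecomposable Λ C ∧
  ∀ (Z : ModuleCat.{0} Λ) (h : Z →ₗ[Λ] C), Module.Finite Λ Z →
    (¬∃ s : C →ₗ[Λ] Z, h ∘ₗ s = LinearMap.id) → ∃ l : (Z →ₗ[Λ] E), g ∘ₗ l = h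

/-- `N` is the Auslander-Reiten translate `τ M` of `M`: writing `M ≅ P ⊕ (⊕ᵢ Cᵢ)` with `P`
projective and `Cᵢ` indecomposable ends of almost split sequences `0 → Aᵢ → Eᵢ → Cᵢ → 0`,
we have `N ≅ ⊕ᵢ Aᵢ`. -/
def IsTauOf (N M : Type) [AddCommGroup N] [Module Λ N] [AddCommGroup M] [Module Λ M] : Prop :=
  ∃ (r : ℕ) (P : ModuleCat.{0} Λ) (A E C : Fin r → ModuleCat.{0} Λ)
    (f : ∀ i, (A i : Type) →ₗ[Λ] (E i : Type)) (g : ∀ i, (E i : Type) →ₗ[Λ] (C i : Type)),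
    Module.Projective Λ P ∧ (∀ i, IsAlmostSplitSeq Λ (f i) (g i)) ∧
    Nonempty (M ≃ₗ[Λ] (Prod (P : Type) ((i : Fin r) → (C i : Type)))) ∧
    Nonempty (N ≃ₗ[Λ] (∀ i, (A i : Type)))

end Prelim

section HomModule

variable {R : Type} [Ring R] {T M : Type} [AddCommGroup T] [Module R T]
  [AddCommGroup M] [Module R M]

/-- `Hom_R(T, M)` as a left module over `B = End_R(T)ᵒᵖ`, via precomposition. -/
instance instSMulHomEndOp : SMul (Module.End R T)ᵐᵒᵖ (T →ₗ[R] M) :=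
  ⟨fun b f => f ∘ₗ b.unop⟩

lemma endOp_smul_def (b : (Module.End R T)ᵐᵒᵖ) (f : T →ₗ[R] M) :
    b • f = f ∘ₗ b.unop := rfl

instance instMulActionHomEndOp : MulAction (Module.End R T)ᵐᵒᵖ (T →ₗ[R] M) where
  one_smul f := by ext x; rfl
  mul_smul b c f := by ext x; rfl

instance instDistribMulActionHomEndOp :
    DistribMulAction (Module.End R T)ᵐᵒᵖ (T →ₗ[R] M) where
  smul_zero b := by ext x; rfl
  smul_add b f g := by ext x; rfl

instance instModuleHomEndOp : Module (Module.End R T)ᵐᵒᵖ (T →ₗ[R] M) where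
  add_smul b c f := by ext x; simp [endOp_smul_def]
  zero_smul f := by ext x; simp [endOp_smul_def]

end HomModule

universe u v in
theorem Module.Injective.of_split {R : Type u} {Q X : Type v} [Ring R]
    [AddCommGroup Q] [Module R Q] [AddCommGroup X] [Module R X] [Module.Injective R Q]
    (i : X →ₗ[R] Q) (r : Q →ₗ[R] X) (H : r ∘ₗ i = LinearMap.id) : Module.Injective R X where
  out _ _ _ _ _ _ f hf g := by
    obtain ⟨h, hh⟩ := Module.Injective.out f hf (i ∘ₗ g)
    refine ⟨r ∘ₗ h, fun x => ?_⟩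
    simpa using congr(r $(hh x)).trans (LinearMap.congr_fun H (g x))

section ProjInj

variable {Λ : Type} [Ring Λ] {X : Type} [AddCommGroup X] [Module Λ X]

theorem GenByProjInj.injective_of_projective (hX : GenByProjInj Λ X) [Module.Projective Λ X] :
    Module.Injective Λ X := by
  obtain ⟨Q, -, ⟨-, _⟩, f, hf⟩ := hX
  obtain ⟨s, hs⟩ := Module.projective_lifting_property f LinearMap.id hf
  exact Module.Injective.of_split s f hs

theorem CogenByProjInj.projective_of_injective (hX : CogenByProjInj Λ X) [Module.Injective Λ X] :
    Module.Projective Λ X := by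
  obtain ⟨Q, -, ⟨_, -⟩, g, hg⟩ := hX
  obtain ⟨r, hr⟩ := Module.Injective.out g hg LinearMap.id
  exact Module.Projective.of_split g r (LinearMap.ext hr)

end ProjInj

theorem stmt1_general (Λ : Type) [Ring Λ]
    (X : Type) [AddCommGroup X] [Module Λ X]
    (hX : MemC Λ X) :
    (Module.Projective Λ X → Module.Injective Λ X) ∧
    (Module.Injective Λ X → Module.Projective Λ X) :=
  ⟨fun _ => hX.1.injective_of_projective, fun _ => hX.2.projective_of_injective⟩

theorem stmt1 (Λ : Type) [Ring Λ] (k : Type) [CommRing k] [IsArtinianRing k] [Algebra k Λ]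
    [Module.Finite k Λ]
    (X : Type) [AddCommGroup X] [Module Λ X] [Module.Finite Λ X]
    (hX : MemC Λ X) :
    (Module.Projective Λ X → Module.Injective Λ X) ∧
    (Module.Injective Λ X → Module.Projective Λ X) :=
  stmt1_general Λ X hX
end

section
/- Let Λ be an artin algebra, X a module in C_Λ = Gen(Q̃) ∩ Cogen(Q̃), and Y a Λ-module with projective dimension exactly 1. Then Ext¹_Λ(Y, X) = 0. -/
/-!
Take a projective presentation `0 → K → P → Y → 0`; as `pd Y ≤ 1`, `K` is projective.
Then `Ext¹(Y, X)` is the cokernel of restriction `Hom(P, X) → Hom(K, X)`, and this map is onto: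
a map `K → X` lifts through an epimorphism `Q → X` from a projective-injective `Q`
(`K` is projective) and then extends from `K` to `P` (`Q` is injective).
-/

open Function LinearMap

universe v

section Splitting

variable {R : Type*} [Ring R]

lemma exists_comp_eq_of_range_le {K X E : Type*} [AddCommGroup K] [Module R K]
    [AddCommGroup X] [Module R X] [AddCommGroup E] [Module R E]
    {f : X →ₗ[R] E} (hf : Injective f) (φ : K →ₗ[R] E) (h : range φ ≤ range f) :
    ∃ k : K →ₗ[R] X, f ∘ₗ k = φ :=
  ⟨(LinearEquiv.ofInjective f hf).symm ∘ₗ φ.codRestrict (range f) (fun x ↦ h ⟨x, rfl⟩), by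
    ext x
    exact congrArg Subtype.val
      ((LinearEquiv.ofInjective f hf).apply_symm_apply ⟨φ x, h ⟨x, rfl⟩⟩)⟩

lemma exists_comp_eq_of_ker_le {P Y E : Type*} [AddCommGroup P] [Module R P]
    [AddCommGroup Y] [Module R Y] [AddCommGroup E] [Module R E]
    {p : P →ₗ[R] Y} (hp : Surjective p) (φ : P →ₗ[R] E) (h : ker p ≤ ker φ) :
    ∃ s : Y →ₗ[R] E, s ∘ₗ p = φ :=
  ⟨(ker p).liftQ φ h ∘ₗ (p.quotKerEquivOfSurjective hp).symm, by
    ext x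
    simp only [LinearMap.comp_apply, LinearEquiv.coe_coe, quotKerEquivOfSurjective_symm_apply,
      Submodule.liftQ_apply]⟩

lemma exists_extend_of_surjective_of_injective {K P Q : Type v} {X : Type*}
    [AddCommGroup K] [Module R K] [AddCommGroup P] [Module R P]
    [AddCommGroup Q] [Module R Q] [AddCommGroup X] [Module R X]
    [Module.Projective R K] [Module.Injective R Q]
    {q : Q →ₗ[R] X} (hq : Surjective q) {i : K →ₗ[R] P} (hi : Injective i) (k : K →ₗ[R] X) :
    ∃ k' : P →ₗ[R] X, k' ∘ₗ i = k := by
  obtain ⟨k₁, hk₁⟩ := Module.projective_lifting_property q k hq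
  obtain ⟨k₂, hk₂⟩ := Module.Injective.out i hi k₁
  exact ⟨q ∘ₗ k₂, by ext x; simp [hk₂, ← hk₁]⟩

theorem exists_retraction_of_forall_extend {X E Y P : Type*}
    [AddCommGroup X] [Module R X] [AddCommGroup E] [Module R E]
    [AddCommGroup Y] [Module R Y] [AddCommGroup P] [Module R P] [Module.Projective R P]
    {p : P →ₗ[R] Y} (hp : Surjective p)
    (hext : ∀ k : ker p →ₗ[R] X, ∃ k' : P →ₗ[R] X, k' ∘ₗ (ker p).subtype = k)
    {f : X →ₗ[R] E} {g : E →ₗ[R] Y} (hf : Injective f) (hg : Surjective g) (hfg : Exact f g) :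
    ∃ r : E →ₗ[R] X, r ∘ₗ f = LinearMap.id := by
  obtain ⟨h, hgh⟩ := Module.projective_lifting_property g p hg
  have h_ker : range (h ∘ₗ (ker p).subtype) ≤ range f := by
    rintro _ ⟨x, rfl⟩
    rw [← hfg.linearMap_ker_eq, mem_ker, LinearMap.comp_apply, ← LinearMap.comp_apply g h, hgh]
    exact x.2
  obtain ⟨k, hk⟩ := exists_comp_eq_of_range_le hf _ h_ker
  obtain ⟨k', hk'⟩ := hext k
  obtain ⟨s, hs⟩ := exists_comp_eq_of_ker_le hp (h - f ∘ₗ k') fun x hx ↦ by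
    have hkx : f (k ⟨x, hx⟩) = h x := congr($hk ⟨x, hx⟩)
    have hk'x : k' x = k ⟨x, hx⟩ := congr($hk' ⟨x, hx⟩)
    simp [hk'x, hkx]
  have hgs : g ∘ₗ s = LinearMap.id := by
    rw [← LinearMap.cancel_right hp, LinearMap.comp_assoc, hs, comp_sub, hgh,
      ← LinearMap.comp_assoc, hfg.linearMap_comp_eq_zero, zero_comp, sub_zero, LinearMap.id_comp]
  exact ((hfg.split_tfae hf hg).out 0 1).mp (⟨s, hgs⟩ : ∃ l, g ∘ₗ l = LinearMap.id)

end Splitting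

theorem stmt3_general (Λ : Type) [Ring Λ]
    (X : Type) [AddCommGroup X] [Module Λ X] (hX : MemC Λ X)
    (Y : Type) [AddCommGroup Y] [Module Λ Y]
    (hY1 : pdLE Λ 1 Y) :
    Ext1Vanish Λ Y X := by
  intro E f g hf hg hfg
  obtain ⟨Q, -, ⟨-, hQ⟩, q, hq⟩ := hX.1
  obtain ⟨P, p, hP, -, hp, hK⟩ := hY1
  have : Module.Projective Λ (ker p) := hK
  exact exists_retraction_of_forall_extend hp
    (fun k ↦ exists_extend_of_surjective_of_injective hq (ker p).injective_subtype k)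
    hf hg (exact_iff.mpr hfg.symm)

theorem stmt3 (Λ : Type) [Ring Λ] (k : Type) [CommRing k] [IsArtinianRing k] [Algebra k Λ]
    [Module.Finite k Λ]
    (X : Type) [AddCommGroup X] [Module Λ X] [Module.Finite Λ X] (hX : MemC Λ X)
    (Y : Type) [AddCommGroup Y] [Module Λ Y] [Module.Finite Λ Y]
    (hY1 : pdLE Λ 1 Y) (hY0 : ¬ Module.Projective Λ Y) :
    Ext1Vanish Λ Y X :=
  stmt3_general Λ X hX Y hY1
end

section
/- Let 0 → A → B → C → 0 be a non-split short exact sequence of modules over an artin algebra. If the endomorphism ring of A is local, then the map B → C is right minimal; if the endomorphism ring of C is local, then the map A → B is left minimal. -/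
/-!
If `g h = g`, then `h - 1` lands in `ker g = range f`, so `h = 1 + f s` for some `s : B → A`.
As `f` does not split, `s f` is not a unit of the local ring `End A`, so `1 + s f` is a unit,
and then so is `1 + f s` by Jacobson's lemma. Dually, if `h f = f` then `h = 1 + t g` with
`t : C → B`, and `g t` is not a unit of `End C` because `g` does not split either.
-/


open Function LinearMap

theorem IsLocalRing.isUnit_one_add_of_not_isUnit {R : Type*} [Ring R] [IsLocalRing R] {a : R}
    (h : ¬IsUnit a) : IsUnit (1 + a) :=
  (IsLocalRing.isUnit_or_isUnit_of_add_one (neg_add_cancel_comm_assoc a 1)).resolve_left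
    (by rwa [IsUnit.neg_iff])

namespace LinearMap

variable {R M N P : Type*} [Ring R] [AddCommGroup M] [Module R M] [AddCommGroup N] [Module R N]
  [AddCommGroup P] [Module R P]

theorem exists_comp_eq_of_range_le {f : M →ₗ[R] N} (hf : Injective f) {u : P →ₗ[R] N}
    (hu : range u ≤ range f) : ∃ s : P →ₗ[R] M, f ∘ₗ s = u :=
  ⟨(LinearEquiv.ofInjective f hf).symm.toLinearMap ∘ₗ u.codRestrict _ fun p => hu ⟨p, rfl⟩,
    by ext p; simp⟩

theorem exists_comp_eq_of_ker_le {g : N →ₗ[R] P} (hg : Surjective g) {u : N →ₗ[R] M}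
    (hu : ker g ≤ ker u) : ∃ t : P →ₗ[R] M, t ∘ₗ g = u :=
  ⟨(ker g).liftQ u hu ∘ₗ (g.quotKerEquivOfSurjective hg).symm.toLinearMap,
    by ext n; simp [quotKerEquivOfSurjective_symm_apply]⟩

theorem exists_leftInverse_of_isUnit_comp {f : M →ₗ[R] N} {s : N →ₗ[R] M}
    (h : IsUnit (s ∘ₗ f : Module.End R M)) : ∃ r : N →ₗ[R] M, r ∘ₗ f = id := by
  obtain ⟨w, hw⟩ := h
  exact ⟨(↑w⁻¹ : Module.End R M) ∘ₗ s, by rw [comp_assoc, ← hw]; exact w.inv_mul⟩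

theorem exists_rightInverse_of_isUnit_comp {g : N →ₗ[R] P} {t : P →ₗ[R] N}
    (h : IsUnit (g ∘ₗ t : Module.End R P)) : ∃ l : P →ₗ[R] N, g ∘ₗ l = id := by
  obtain ⟨w, hw⟩ := h
  exact ⟨t ∘ₗ (↑w⁻¹ : Module.End R P), by rw [← comp_assoc, ← hw]; exact w.mul_inv⟩

/-- Jacobson's lemma across two modules: if `(1 + s f)⁻¹ = w` then `(1 + f s)⁻¹ = 1 - f w s`. -/
theorem isUnit_one_add_comp_swap {f : M →ₗ[R] N} {s : N →ₗ[R] M}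
    (h : IsUnit (1 + s ∘ₗ f : Module.End R M)) : IsUnit (1 + f ∘ₗ s : Module.End R N) := by
  obtain ⟨w, hw⟩ := h
  set v : Module.End R M := ↑w⁻¹
  have hwl (x : M) : v x + s (f (v x)) = x := by
    have := congr($(w.mul_inv) x)
    rw [hw] at this
    simpa using this
  have hwr (x : M) : v (x + s (f x)) = x := by
    have := congr($(w.inv_mul) x)
    rw [hw] at this
    simpa using this
  refine ⟨⟨_, 1 - f ∘ₗ v ∘ₗ s, ?_, ?_⟩, rfl⟩
  · ext y
    have := congr(f $(hwl (s y)))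
    rw [map_add] at this
    simp only [Module.End.mul_apply, add_apply, sub_apply, comp_apply, Module.End.one_apply,
      map_sub]
    rw [← this]
    abel
  · ext y
    simp only [Module.End.mul_apply, add_apply, sub_apply, comp_apply, Module.End.one_apply,
      map_add s, hwr]
    abel

theorem bijective_one_add_comp_of_not_isUnit [IsLocalRing (Module.End R M)]
    {f : M →ₗ[R] N} {s : N →ₗ[R] M} (h : ¬IsUnit (s ∘ₗ f : Module.End R M)) :
    Bijective (1 + f ∘ₗ s : Module.End R N) :=
  (Module.End.isUnit_iff _).mp <|
    isUnit_one_add_comp_swap (IsLocalRing.isUnit_one_add_of_not_isUnit h)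

end LinearMap

section Minimal

variable {Λ : Type} [Ring Λ] {A B C : Type} [AddCommGroup A] [Module Λ A] [AddCommGroup B]
  [Module Λ B] [AddCommGroup C] [Module Λ C] {f : A →ₗ[Λ] B} {g : B →ₗ[Λ] C}

theorem rightMinimal_of_isLocalRing_end_of_not_split [IsLocalRing (Module.End Λ A)]
    (hf : Injective f) (hfg : range f = ker g)
    (hns : ¬∃ r : B →ₗ[Λ] A, r ∘ₗ f = LinearMap.id) : RightMinimal Λ g := by
  intro h hgh
  obtain ⟨s, hs⟩ : ∃ s : B →ₗ[Λ] A, f ∘ₗ s = h - 1 := by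
    refine exists_comp_eq_of_range_le hf ?_
    rw [hfg]
    rintro _ ⟨b, rfl⟩
    rw [mem_ker, LinearMap.sub_apply, map_sub, ← LinearMap.comp_apply, hgh,
      Module.End.one_apply, sub_self]
  have hunit : ¬IsUnit (s ∘ₗ f : Module.End Λ A) :=
    fun hu => hns (exists_leftInverse_of_isUnit_comp hu)
  simpa [hs] using bijective_one_add_comp_of_not_isUnit hunit

theorem leftMinimal_of_isLocalRing_end_of_not_split [IsLocalRing (Module.End Λ C)]
    (hf : Injective f) (hg : Surjective g) (hfg : range f = ker g)
    (hns : ¬∃ r : B →ₗ[Λ] A, r ∘ₗ f = LinearMap.id) : LeftMinimal Λ f := by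
  intro h hhf
  obtain ⟨t, ht⟩ : ∃ t : C →ₗ[Λ] B, t ∘ₗ g = h - 1 := by
    refine exists_comp_eq_of_ker_le hg ?_
    rw [← hfg]
    rintro _ ⟨a, rfl⟩
    rw [mem_ker, LinearMap.sub_apply, ← LinearMap.comp_apply, hhf, Module.End.one_apply, sub_self]
  have hunit : ¬IsUnit (g ∘ₗ t : Module.End Λ C) := fun hu =>
    hns (((exact_iff.mpr hfg.symm).split_tfae hf hg).out 0 1 |>.mp
      (exists_rightInverse_of_isUnit_comp hu))
  simpa [ht] using bijective_one_add_comp_of_not_isUnit hunit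

end Minimal

theorem stmt4_general (Λ : Type) [Ring Λ]
    (A B C : Type) [AddCommGroup A] [Module Λ A]
    [AddCommGroup B] [Module Λ B]
    [AddCommGroup C] [Module Λ C]
    (f : A →ₗ[Λ] B) (g : B →ₗ[Λ] C)
    (hf : Injective f) (hg : Surjective g)
    (hex : LinearMap.range f = LinearMap.ker g)
    (hns : ¬∃ r : B →ₗ[Λ] A, r ∘ₗ f = LinearMap.id) :
    (IsLocalRing (Module.End Λ A) → RightMinimal Λ g) ∧
    (IsLocalRing (Module.End Λ C) → LeftMinimal Λ f) :=
  ⟨fun _ => rightMinimal_of_isLocalRing_end_of_not_split hf hex hns,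
    fun _ => leftMinimal_of_isLocalRing_end_of_not_split hf hg hex hns⟩

theorem stmt4 (Λ : Type) [Ring Λ] (k : Type) [CommRing k] [IsArtinianRing k] [Algebra k Λ]
    [Module.Finite k Λ]
    (A B C : Type) [AddCommGroup A] [Module Λ A] [Module.Finite Λ A]
    [AddCommGroup B] [Module Λ B] [Module.Finite Λ B]
    [AddCommGroup C] [Module Λ C] [Module.Finite Λ C]
    (f : A →ₗ[Λ] B) (g : B →ₗ[Λ] C)
    (hf : Injective f) (hg : Surjective g)
    (hex : LinearMap.range f = LinearMap.ker g)
    (hns : ¬∃ r : B →ₗ[Λ] A, r ∘ₗ f = LinearMap.id) :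
    (IsLocalRing (Module.End Λ A) → RightMinimal Λ g) ∧
    (IsLocalRing (Module.End Λ C) → LeftMinimal Λ f) :=
  stmt4_general Λ A B C f g hf hg hex hns
end

section
/- Let 0 → Y → Q → X → 0 be a non-split short exact sequence of finitely generated modules over an artin algebra, where Q is projective. If Y is indecomposable and the map Y → Q is left minimal, then X is indecomposable and the map Q → X is right minimal (i.e., a projective cover). -/
open Function LinearMap

/-!
Every endomorphism `h` of `Q` lifting an endomorphism of `X` restricts to an endomorphism `h'`
of `Y`, which by Fitting's lemma is nilpotent or an automorphism. If `h` lifts the identity and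
`h'` is nilpotent, then `hⁿ` vanishes on `Y` while `g ∘ hⁿ = g`, and `1 - hⁿ` factors through `f`,
splitting the sequence; so `g` is right minimal, hence a projective cover as `Q` is projective.
If `h'` is an automorphism, `f Y` lies in the Fitting core `⋂ₙ range hⁿ`, so left minimality of
`f` kills the complementary summand `⋃ₙ ker hⁿ` and `h` is an automorphism. Applied to lifts of
`e` and `1 - e` for an idempotent `e` of `X`, this forces `e = 1` or `e = 0`.
-/

section Minimality

variable {Λ : Type} [Ring Λ] {M Y Q X : Type} [AddCommGroup M] [Module Λ M]
  [AddCommGroup Y] [Module Λ Y] [AddCommGroup Q] [Module Λ Q] [AddCommGroup X] [Module Λ X]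

lemma Indecomposable.eq_bot_or_eq_bot_of_isCompl (hM : Indecomposable Λ M)
    {p q : Submodule Λ M} (hpq : IsCompl p q) : p = ⊥ ∨ q = ⊥ := by
  rcases hM.2 _ (Submodule.isIdempotentElem_projection hpq).eq with h | h
  · left
    simpa [h] using (Submodule.range_projection hpq).symm
  · right
    simpa [h] using (Submodule.ker_projection hpq).symm

theorem Indecomposable.isNilpotent_or_bijective [IsArtinian Λ M] [IsNoetherian Λ M]
    (hM : Indecomposable Λ M) (φ : Module.End Λ M) : IsNilpotent φ ∨ Bijective φ := by
  obtain ⟨n, hcompl, hn⟩ :=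
    (φ.eventually_isCompl_ker_pow_range_pow.and (Filter.eventually_ne_atTop 0)).exists
  rcases hM.eq_bot_or_eq_bot_of_isCompl hcompl with hker | hrange
  · exact .inr <| IsArtinian.bijective_of_injective_endomorphism φ <|
      Module.End.injective_of_iterate_injective hn (ker_eq_bot.mp hker)
  · exact .inl ⟨n, range_eq_bot.mp hrange⟩

lemma pow_comp_eq_comp_pow {f : Y →ₗ[Λ] Q} {h : Module.End Λ Q} {h' : Module.End Λ Y}
    (hc : h ∘ₗ f = f ∘ₗ h') (n : ℕ) : (h ^ n) ∘ₗ f = f ∘ₗ h' ^ n := by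
  induction n with
  | zero => rfl
  | succ n ih => rw [pow_succ, pow_succ, Module.End.mul_eq_comp, Module.End.mul_eq_comp,
      LinearMap.comp_assoc, hc, ← LinearMap.comp_assoc, ih, LinearMap.comp_assoc]

lemma LeftMinimal.eq_bot_of_isCompl {f : Y →ₗ[Λ] Q} (hf : LeftMinimal Λ f)
    {p q : Submodule Λ Q} (hpq : IsCompl p q) (hfp : range f ≤ p) : q = ⊥ := by
  have hπ := hf (p.projection q hpq) <|
    LinearMap.ext fun y => Submodule.projection_apply_of_mem_left hpq (hfp ⟨y, rfl⟩)
  rw [← Submodule.ker_projection hpq, ker_eq_bot]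
  exact hπ.1

theorem LeftMinimal.bijective_of_comp_eq_comp [IsArtinian Λ Q] [IsNoetherian Λ Q]
    {f : Y →ₗ[Λ] Q} (hf : LeftMinimal Λ f) {h : Module.End Λ Q} {h' : Module.End Λ Y}
    (hc : h ∘ₗ f = f ∘ₗ h') (hh' : Surjective h') : Bijective h := by
  have hrange : range f ≤ ⨅ n, range (h ^ n) := by
    refine le_iInf fun n => ?_
    rintro _ ⟨y, rfl⟩
    obtain ⟨y', rfl⟩ := (Module.End.iterate_surjective hh' n) y
    exact ⟨f y', congr($(pow_comp_eq_comp_pow hc n) y')⟩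
  have hker := hf.eq_bot_of_isCompl h.isCompl_iSup_ker_pow_iInf_range_pow.symm hrange
  refine IsArtinian.bijective_of_injective_endomorphism h (ker_eq_bot.mp (le_bot_iff.mp ?_))
  exact hker ▸ le_iSup_of_le 1 (by rw [pow_one])

end Minimality

section ShortExact

variable {Λ : Type} [Ring Λ] {Y Q X Z : Type} [AddCommGroup Y] [Module Λ Y]
  [AddCommGroup Q] [Module Λ Q] [AddCommGroup X] [Module Λ X] [AddCommGroup Z] [Module Λ Z]
  {f : Y →ₗ[Λ] Q} {g : Q →ₗ[Λ] X}

lemma exists_comp_eq_of_range_le_s5 (hf : Injective f) {t : Z →ₗ[Λ] Q}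
    (ht : range t ≤ range f) : ∃ r : Z →ₗ[Λ] Y, f ∘ₗ r = t :=
  ⟨(LinearEquiv.ofInjective f hf).symm ∘ₗ Submodule.inclusion ht ∘ₗ t.rangeRestrict,
    by ext; simp⟩

lemma exists_restriction_of_comp_eq_comp (hf : Injective f) (hfg : range f = ker g)
    {h : Module.End Λ Q} {e : Module.End Λ X} (hh : g ∘ₗ h = e ∘ₗ g) :
    ∃ h' : Module.End Λ Y, h ∘ₗ f = f ∘ₗ h' := by
  obtain ⟨h', hh'⟩ := exists_comp_eq_of_range_le_s5 hf (t := h ∘ₗ f) <| by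
    rintro _ ⟨y, rfl⟩
    rw [hfg, mem_ker, ← LinearMap.comp_apply g, ← LinearMap.comp_assoc, hh,
      LinearMap.comp_assoc, range_le_ker_iff.mp hfg.le, comp_zero, LinearMap.zero_apply]
  exact ⟨h', hh'.symm⟩

lemma exists_leftInverse_of_comp_eq_zero (hf : Injective f) (hfg : range f = ker g)
    {φ : Module.End Λ Q} (hφf : φ ∘ₗ f = 0) (hgφ : g ∘ₗ φ = g) :
    ∃ r : Q →ₗ[Λ] Y, r ∘ₗ f = LinearMap.id := by
  obtain ⟨r, hr⟩ := exists_comp_eq_of_range_le_s5 hf (t := LinearMap.id - φ) <| by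
    rintro _ ⟨q, rfl⟩
    rw [hfg, mem_ker, LinearMap.sub_apply, map_sub, ← LinearMap.comp_apply g φ, hgφ,
      id_apply, sub_self]
  refine ⟨r, LinearMap.ext fun y => hf ?_⟩
  rw [LinearMap.comp_apply, ← LinearMap.comp_apply f r, hr, LinearMap.sub_apply,
    ← LinearMap.comp_apply φ f, hφf, LinearMap.zero_apply, sub_zero, id_apply, id_apply]

theorem rightMinimal_of_not_split [IsArtinian Λ Y] [IsNoetherian Λ Y] [IsArtinian Λ Q]
    (hf : Injective f) (hfg : range f = ker g)
    (hns : ¬∃ r : Q →ₗ[Λ] Y, r ∘ₗ f = LinearMap.id) (hY : Indecomposable Λ Y) :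
    RightMinimal Λ g := by
  intro h hgh
  obtain ⟨h', hh'⟩ := exists_restriction_of_comp_eq_comp hf hfg (e := 1) hgh
  rcases hY.isNilpotent_or_bijective h' with ⟨m, hm⟩ | hbij
  · refine absurd (exists_leftInverse_of_comp_eq_zero hf hfg (φ := h ^ m) ?_ ?_) hns
    · rw [pow_comp_eq_comp_pow hh' m, hm, comp_zero]
    · simpa [Module.End.one_eq_id] using
        (pow_comp_eq_comp_pow (h := (1 : Module.End Λ X)) hgh.symm m).symm
  · refine IsArtinian.bijective_of_injective_endomorphism h <|
      (injective_iff_map_eq_zero h).mpr fun q hq => ?_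
    obtain ⟨y, rfl⟩ : q ∈ range f := by
      rw [hfg, mem_ker, ← congr($hgh q), LinearMap.comp_apply, hq, map_zero]
    have hy : f (h' y) = 0 := by
      rw [← LinearMap.comp_apply f h', ← hh', LinearMap.comp_apply, hq]
    rw [(injective_iff_map_eq_zero h').mp hbij.1 y ((injective_iff_map_eq_zero f).mp hf _ hy),
      map_zero]

theorem RightMinimal.isProjCover [Module.Projective Λ Q] (hg : Surjective g)
    (hmin : RightMinimal Λ g) : IsProjCover Λ g := by
  refine ⟨inferInstance, hg, fun N hN => ?_⟩
  have hgN : Surjective (g ∘ₗ N.subtype) := by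
    intro x
    obtain ⟨q, rfl⟩ := hg x
    have hq : q ∈ N ⊔ ker g := hN ▸ Submodule.mem_top
    obtain ⟨a, ha, b, hb, rfl⟩ := Submodule.mem_sup.mp hq
    exact ⟨⟨a, ha⟩, by simp [mem_ker.mp hb]⟩
  obtain ⟨s, hs⟩ := Module.projective_lifting_property (g ∘ₗ N.subtype) g hgN
  have hbij := hmin (N.subtype ∘ₗ s) (by rw [← LinearMap.comp_assoc, hs])
  rw [eq_top_iff]
  rintro q -
  obtain ⟨q', rfl⟩ := hbij.2 q
  exact (s q').2

end ShortExact

section Indecomposability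

variable {Λ : Type} [Ring Λ] {Y Q X : Type} [AddCommGroup Y] [Module Λ Y]
  [AddCommGroup Q] [Module Λ Q] [AddCommGroup X] [Module Λ X]
  {f : Y →ₗ[Λ] Q} {g : Q →ₗ[Λ] X}

theorem LeftMinimal.eq_one_of_isIdempotentElem [IsArtinian Λ Q] [IsNoetherian Λ Q]
    (hmin : LeftMinimal Λ f) (hg : Surjective g) {e : Module.End Λ X} (he : IsIdempotentElem e)
    {h : Module.End Λ Q} {h' : Module.End Λ Y} (hh : g ∘ₗ h = e ∘ₗ g)
    (hh' : h ∘ₗ f = f ∘ₗ h') (hsurj : Surjective h') : e = 1 := by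
  have hbij := hmin.bijective_of_comp_eq_comp hh' hsurj
  have he_surj : Surjective e := by
    refine Surjective.of_comp (g := g) ?_
    rw [← LinearMap.coe_comp, ← hh, LinearMap.coe_comp]
    exact hg.comp hbij.2
  ext x
  obtain ⟨x, rfl⟩ := he_surj x
  exact congr($he x)

theorem indecomposable_of_leftMinimal [IsArtinian Λ Y] [IsNoetherian Λ Y] [IsArtinian Λ Q]
    [IsNoetherian Λ Q] [Module.Projective Λ Q] (hf : Injective f) (hg : Surjective g)
    (hfg : range f = ker g) (hns : ¬∃ r : Q →ₗ[Λ] Y, r ∘ₗ f = LinearMap.id)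
    (hY : Indecomposable Λ Y) (hmin : LeftMinimal Λ f) : Indecomposable Λ X := by
  refine ⟨?_, fun e he => ?_⟩
  · by_contra! hX
    refine hns (exists_leftInverse_of_comp_eq_zero hf hfg (φ := 0) (zero_comp f) ?_)
    exact LinearMap.ext fun q => (hX _).trans (hX _).symm
  obtain ⟨h, hh⟩ := Module.projective_lifting_property g (e ∘ₗ g) hg
  obtain ⟨h', hh'⟩ := exists_restriction_of_comp_eq_comp hf hfg hh
  rcases hY.isNilpotent_or_bijective h' with hnil | hbij
  · left
    have hunit := (Module.End.isUnit_iff _).mp hnil.isUnit_one_sub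
    have := hmin.eq_one_of_isIdempotentElem hg (IsIdempotentElem.one_sub he) (h := 1 - h)
      (by rw [sub_comp, comp_sub, hh]; rfl) (by rw [sub_comp, comp_sub, hh']; rfl) hunit.2
    simpa using this
  · right
    exact hmin.eq_one_of_isIdempotentElem hg he hh hh' hbij.2

end Indecomposability

theorem stmt5_general (Λ : Type) [Ring Λ] (k : Type) [CommRing k] [IsArtinianRing k] [Algebra k Λ]
    [Module.Finite k Λ]
    (Y Q X : Type) [AddCommGroup Y] [Module Λ Y] [Module.Finite Λ Y]
    [AddCommGroup Q] [Module Λ Q] [Module.Finite Λ Q]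
    [AddCommGroup X] [Module Λ X]
    (f : Y →ₗ[Λ] Q) (g : Q →ₗ[Λ] X)
    (hf : Injective f) (hg : Surjective g)
    (hex : LinearMap.range f = LinearMap.ker g)
    (hns : ¬∃ r : Q →ₗ[Λ] Y, r ∘ₗ f = LinearMap.id)
    (hQ : Module.Projective Λ Q)
    (hY : Indecomposable Λ Y) (hmin : LeftMinimal Λ f) :
    Indecomposable Λ X ∧ RightMinimal Λ g ∧ IsProjCover Λ g := by
  have : IsArtinianRing Λ := .of_finite k Λ
  have hRM := rightMinimal_of_not_split hf hex hns hY
  exact ⟨indecomposable_of_leftMinimal hf hg hex hns hY hmin, hRM, hRM.isProjCover hg⟩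

theorem stmt5 (Λ : Type) [Ring Λ] (k : Type) [CommRing k] [IsArtinianRing k] [Algebra k Λ]
    [Module.Finite k Λ]
    (Y Q X : Type) [AddCommGroup Y] [Module Λ Y] [Module.Finite Λ Y]
    [AddCommGroup Q] [Module Λ Q] [Module.Finite Λ Q]
    [AddCommGroup X] [Module Λ X] [Module.Finite Λ X]
    (f : Y →ₗ[Λ] Q) (g : Q →ₗ[Λ] X)
    (hf : Injective f) (hg : Surjective g)
    (hex : LinearMap.range f = LinearMap.ker g)
    (hns : ¬∃ r : Q →ₗ[Λ] Y, r ∘ₗ f = LinearMap.id)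
    (hQ : Module.Projective Λ Q)
    (hY : Indecomposable Λ Y) (hmin : LeftMinimal Λ f) :
    Indecomposable Λ X ∧ RightMinimal Λ g ∧ IsProjCover Λ g :=
  stmt5_general Λ k Y Q X f g hf hg hex hns hQ hY hmin
end

section
/- Let 0 → Y → Q → X → 0 be a non-split short exact sequence over an artin algebra Λ with Q projective-injective. Then the following are equivalent: (1) X is indecomposable and Q → X is a projective cover; (2) Y is indecomposable and Y → Q is an injective envelope. -/
open Function LinearMap

/-!
An endomorphism of the sequence `Y →f Q →g X` is a triple `(α, φ, ψ)` with `φ f = f α` and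
`g φ = ψ g`. Since `Q` is injective every `α` extends to such a triple, and since `Q` is
projective every `ψ` lifts to one. If `ψⁿ = 0` then `φⁿ` factors through `f`, so `αⁿ` factors
through `f` and, when `α` is invertible, the sequence splits; dually when `αⁿ = 0` and `ψ` is
invertible.

Assume (1). By Fitting's lemma `ψ` is invertible or nilpotent; for invertible `α` the nilpotent
case is excluded by non-splitting, and since `g` is a projective cover `φ` is then invertible.
Applied to `α = id` and a `φ` killing a submodule `N` with `N ∩ Y = 0`, this shows that `Y` is
essential in `Q`; applied to idempotents `α`, that `Y` is indecomposable. The converse is dual.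
-/

open Module (End)

section Factorization

variable {R : Type*} [Ring R] {Y Q X W : Type*} [AddCommGroup Y] [Module R Y]
  [AddCommGroup Q] [Module R Q] [AddCommGroup X] [Module R X] [AddCommGroup W] [Module R W]
  {f : Y →ₗ[R] Q} {g : Q →ₗ[R] X}

lemma Function.Exact.exists_lift (hfg : Exact f g) (hf : Injective f) (h : W →ₗ[R] Q)
    (hh : g ∘ₗ h = 0) : ∃ s : W →ₗ[R] Y, f ∘ₗ s = h := by
  have hle : ∀ w, h w ∈ LinearMap.range f := fun w ↦ (hfg (h w)).mp (LinearMap.congr_fun hh w)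
  exact ⟨(LinearEquiv.ofInjective f hf).symm ∘ₗ h.codRestrict _ hle, by ext w; simp⟩

lemma Function.Exact.exists_desc (hfg : Exact f g) (hg : Surjective g) (h : Q →ₗ[R] W)
    (hh : h ∘ₗ f = 0) : ∃ t : X →ₗ[R] W, t ∘ₗ g = h := by
  have hle : LinearMap.range f ≤ LinearMap.ker h := by
    rintro _ ⟨y, rfl⟩
    exact LinearMap.congr_fun hh y
  exact ⟨(LinearMap.range f).liftQ h hle ∘ₗ (hfg.linearEquivOfSurjective hg).symm.toLinearMap,
    by ext q; simp⟩

end Factorization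

section Indecomposable

variable {R : Type} [Ring R] {M : Type} [AddCommGroup M] [Module R M]

lemma Indecomposable.eq_bot_or_eq_top_of_isCompl (hM : Indecomposable R M)
    {p q : Submodule R M} (hpq : IsCompl p q) : p = ⊥ ∨ p = ⊤ := by
  rcases hM.2 _ (p.isIdempotentElem_projection hpq) with h | h
  · left
    rw [← p.range_projection hpq, h, LinearMap.range_zero]
  · right
    rw [← p.range_projection hpq, h, LinearMap.range_id]

lemma Indecomposable.bijective_or_isNilpotent [IsArtinian R M] [IsNoetherian R M]
    (hM : Indecomposable R M) (φ : End R M) : Bijective φ ∨ IsNilpotent φ := by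
  obtain ⟨n, hn⟩ := (LinearMap.eventually_isCompl_ker_pow_range_pow φ).exists_forall_of_atTop
  rcases hM.eq_bot_or_eq_top_of_isCompl (hn (n + 1) n.le_succ) with h | h
  · left
    refine IsArtinian.bijective_of_injective_endomorphism φ (LinearMap.ker_eq_bot.mp ?_)
    rw [eq_bot_iff, ← h, pow_succ, Module.End.mul_eq_comp]
    exact LinearMap.ker_le_ker_comp φ _
  · exact Or.inr ⟨n + 1, LinearMap.ker_eq_top.mp h⟩

lemma indecomposable_of_bijective_or_bijective_one_sub [Nontrivial M]
    (h : ∀ e : End R M, IsIdempotentElem e → Bijective e ∨ Bijective ⇑(1 - e)) :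
    Indecomposable R M := by
  refine ⟨exists_ne 0, fun e (he : IsIdempotentElem e) ↦ ?_⟩
  have eq_one : ∀ e : End R M, IsIdempotentElem e → Bijective e → e = 1 := fun e he hb ↦
    (IsIdempotentElem.iff_eq_one_of_isUnit ((Module.End.isUnit_iff e).mpr hb)).mp he
  rcases h e he with hb | hb
  · exact Or.inr (eq_one e he hb)
  · exact Or.inl (sub_eq_self.mp (eq_one _ he.one_sub hb))

end Indecomposable

section SequenceEndomorphism

variable {R : Type} [Ring R] {Y Q X : Type} [AddCommGroup Y] [Module R Y]
  [AddCommGroup Q] [Module R Q] [AddCommGroup X] [Module R X]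
  {f : Y →ₗ[R] Q} {g : Q →ₗ[R] X} {α : End R Y} {φ : End R Q} {ψ : End R X}

structure IsSeqEndo (f : Y →ₗ[R] Q) (g : Q →ₗ[R] X) (α : End R Y) (φ : End R Q)
    (ψ : End R X) : Prop where
  left : φ ∘ₗ f = f ∘ₗ α
  right : g ∘ₗ φ = ψ ∘ₗ g

namespace IsSeqEndo

lemma of_left (hfg : Exact f g) (hg : Surjective g) (h : φ ∘ₗ f = f ∘ₗ α) :
    ∃ ψ, IsSeqEndo f g α φ ψ := by
  obtain ⟨ψ, hψ⟩ := hfg.exists_desc hg (g ∘ₗ φ) (by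
    rw [LinearMap.comp_assoc, h, ← LinearMap.comp_assoc, hfg.linearMap_comp_eq_zero,
      LinearMap.zero_comp])
  exact ⟨ψ, h, hψ.symm⟩

lemma of_right (hfg : Exact f g) (hf : Injective f) (h : g ∘ₗ φ = ψ ∘ₗ g) :
    ∃ α, IsSeqEndo f g α φ ψ := by
  obtain ⟨α, hα⟩ := hfg.exists_lift hf (φ ∘ₗ f) (by
    rw [← LinearMap.comp_assoc, h, LinearMap.comp_assoc, hfg.linearMap_comp_eq_zero,
      LinearMap.comp_zero])
  exact ⟨α, hα.symm, h⟩

lemma pow (h : IsSeqEndo f g α φ ψ) (n : ℕ) : IsSeqEndo f g (α ^ n) (φ ^ n) (ψ ^ n) :=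
  ⟨Module.End.commute_pow_left_of_commute h.left n,
    (Module.End.commute_pow_left_of_commute h.right.symm n).symm⟩

lemma one_sub (h : IsSeqEndo f g α φ ψ) : IsSeqEndo f g (1 - α) (1 - φ) (1 - ψ) := by
  constructor <;>
    simp only [LinearMap.sub_comp, LinearMap.comp_sub, h.left, h.right, Module.End.one_eq_id,
      LinearMap.id_comp, LinearMap.comp_id]

lemma not_isNilpotent_right (hfg : Exact f g) (hf : Injective f)
    (hns : ¬∃ r : Q →ₗ[R] Y, r ∘ₗ f = LinearMap.id) (h : IsSeqEndo f g α φ ψ)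
    (hα : IsUnit α) : ¬IsNilpotent ψ := by
  rintro ⟨n, hn⟩
  have hn' := h.pow n
  obtain ⟨s, hs⟩ := hfg.exists_lift hf (φ ^ n) (by rw [hn'.right, hn, LinearMap.zero_comp])
  have hsf : s ∘ₗ f = α ^ n :=
    (LinearMap.cancel_left hf).mp (by rw [← LinearMap.comp_assoc, hs, hn'.left])
  obtain ⟨u, hu⟩ := hα.pow n
  refine hns ⟨(↑u⁻¹ : End R Y) ∘ₗ s, ?_⟩
  rw [LinearMap.comp_assoc, hsf, ← hu, ← Module.End.mul_eq_comp, Units.inv_mul,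
    Module.End.one_eq_id]

lemma not_isNilpotent_left (hfg : Exact f g) (hf : Injective f) (hg : Surjective g)
    (hns : ¬∃ r : Q →ₗ[R] Y, r ∘ₗ f = LinearMap.id) (h : IsSeqEndo f g α φ ψ)
    (hψ : IsUnit ψ) : ¬IsNilpotent α := by
  rintro ⟨n, hn⟩
  have hn' := h.pow n
  obtain ⟨t, ht⟩ := hfg.exists_desc hg (φ ^ n) (by rw [hn'.left, hn, LinearMap.comp_zero])
  have hgt : g ∘ₗ t = ψ ^ n :=
    (LinearMap.cancel_right hg).mp (by rw [LinearMap.comp_assoc, ht, hn'.right])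
  obtain ⟨u, hu⟩ := hψ.pow n
  have hsec : g ∘ₗ t ∘ₗ (↑u⁻¹ : End R X) = LinearMap.id := by
    rw [← LinearMap.comp_assoc, hgt, ← hu, ← Module.End.mul_eq_comp, Units.mul_inv,
      Module.End.one_eq_id]
  have hsplit := (hfg.split_tfae hf hg).out 0 1
  exact hns (hsplit.mp ⟨_, hsec⟩)

end IsSeqEndo

end SequenceEndomorphism

section CoverEnvelope

variable {R : Type} [Ring R] {Y Q X : Type} [AddCommGroup Y] [Module R Y]
  [AddCommGroup Q] [Module R Q] [AddCommGroup X] [Module R X]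
  {f : Y →ₗ[R] Q} {g : Q →ₗ[R] X} {α : End R Y} {φ : End R Q} {ψ : End R X}

lemma IsProjCover.bijective_of_surjective_comp [IsNoetherian R Q] (hg : IsProjCover R g)
    (hφ : Surjective (g ∘ₗ φ)) : Bijective φ := by
  refine IsNoetherian.bijective_of_surjective_endomorphism φ (LinearMap.range_eq_top.mp ?_)
  refine hg.2.2 _ ?_
  rw [← Submodule.comap_map_eq, ← LinearMap.range_comp, LinearMap.range_eq_top.mpr hφ,
    Submodule.comap_top]

lemma IsInjEnv.bijective_of_injective_comp [IsArtinian R Q] (hf : IsInjEnv R f)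
    (hφ : Injective (φ ∘ₗ f)) : Bijective φ := by
  refine IsArtinian.bijective_of_injective_endomorphism φ (LinearMap.ker_eq_bot.mp ?_)
  refine hf.2.2 _ ?_
  rw [inf_comm, ← Submodule.map_comap_eq, ← LinearMap.ker_comp, LinearMap.ker_eq_bot.mpr hφ,
    Submodule.map_bot]

namespace IsSeqEndo

lemma bijective_of_isProjCover_of_surjective [IsNoetherian R Q] (hg : IsProjCover R g)
    (h : IsSeqEndo f g α φ ψ) (hψ : Surjective ψ) : Bijective φ := by
  refine hg.bijective_of_surjective_comp ?_
  rw [h.right, LinearMap.coe_comp]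
  exact hψ.comp hg.2.1

lemma bijective_of_isInjEnv_of_injective [IsArtinian R Q] (hf : IsInjEnv R f)
    (h : IsSeqEndo f g α φ ψ) (hα : Injective α) : Bijective φ := by
  refine hf.bijective_of_injective_comp ?_
  rw [h.left, LinearMap.coe_comp]
  exact hf.2.1.comp hα

lemma bijective_left_of_isProjCover [IsNoetherian R Q] [IsArtinian R Y] (hg : IsProjCover R g)
    (hf : Injective f) (h : IsSeqEndo f g α φ ψ) (hψ : Surjective ψ) : Bijective α := by
  have hφ := h.bijective_of_isProjCover_of_surjective hg hψ
  refine IsArtinian.bijective_of_injective_endomorphism α (Injective.of_comp (f := f) ?_)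
  rw [← LinearMap.coe_comp, ← h.left, LinearMap.coe_comp]
  exact hφ.1.comp hf

lemma bijective_right_of_isInjEnv [IsArtinian R Q] [IsNoetherian R X] (hf : IsInjEnv R f)
    (hg : Surjective g) (h : IsSeqEndo f g α φ ψ) (hα : Injective α) : Bijective ψ := by
  have hφ := h.bijective_of_isInjEnv_of_injective hf hα
  refine IsNoetherian.bijective_of_surjective_endomorphism ψ (Surjective.of_comp (g := g) ?_)
  rw [← LinearMap.coe_comp, ← h.right, LinearMap.coe_comp]
  exact hg.comp hφ.2

lemma bijective_of_isProjCover_of_isUnit [IsNoetherian R Q] [IsArtinian R X] [IsNoetherian R X]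
    (hX : Indecomposable R X) (hg : IsProjCover R g) (hfg : Exact f g) (hf : Injective f)
    (hns : ¬∃ r : Q →ₗ[R] Y, r ∘ₗ f = LinearMap.id) (h : IsSeqEndo f g α φ ψ)
    (hα : IsUnit α) : Bijective φ := by
  rcases hX.bijective_or_isNilpotent ψ with hψ | hψ
  · exact h.bijective_of_isProjCover_of_surjective hg hψ.2
  · exact (h.not_isNilpotent_right hfg hf hns hα hψ).elim

lemma bijective_of_isInjEnv_of_isUnit [IsArtinian R Q] [IsArtinian R Y] [IsNoetherian R Y]
    (hY : Indecomposable R Y) (hf : IsInjEnv R f) (hfg : Exact f g) (hg : Surjective g)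
    (hns : ¬∃ r : Q →ₗ[R] Y, r ∘ₗ f = LinearMap.id) (h : IsSeqEndo f g α φ ψ)
    (hψ : IsUnit ψ) : Bijective φ := by
  rcases hY.bijective_or_isNilpotent α with hα | hα
  · exact h.bijective_of_isInjEnv_of_injective hf hα.1
  · exact (h.not_isNilpotent_left hfg hf.2.1 hg hns hψ hα).elim

end IsSeqEndo

end CoverEnvelope

section ProjCoverInjEnv

variable {R : Type} [Ring R] {Y Q X : Type} [AddCommGroup Y] [Module R Y]
  [AddCommGroup Q] [Module R Q] [AddCommGroup X] [Module R X]
  {f : Y →ₗ[R] Q} {g : Q →ₗ[R] X}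

lemma isInjEnv_of_isProjCover [Module.Injective R Q] [IsNoetherian R Q] [IsArtinian R X]
    [IsNoetherian R X] (hX : Indecomposable R X) (hg : IsProjCover R g) (hfg : Exact f g)
    (hf : Injective f) (hns : ¬∃ r : Q →ₗ[R] Y, r ∘ₗ f = LinearMap.id) : IsInjEnv R f := by
  refine ⟨inferInstance, hf, fun N hN ↦ ?_⟩
  have hNf : Injective (N.mkQ ∘ₗ f) := by
    refine LinearMap.ker_eq_bot.mp (eq_bot_iff.mpr fun y hy ↦ ?_)
    have hfy : f y ∈ N ⊓ LinearMap.range f :=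
      ⟨(Submodule.Quotient.mk_eq_zero N).mp hy, LinearMap.mem_range_self f y⟩
    rw [hN, Submodule.mem_bot] at hfy
    exact (Submodule.mem_bot R).mpr (hf (hfy.trans (map_zero f).symm))
  obtain ⟨ι, hι⟩ := Module.Injective.out (N.mkQ ∘ₗ f) hNf f
  have hφ : (ι ∘ₗ N.mkQ) ∘ₗ f = f ∘ₗ (1 : End R Y) := LinearMap.ext hι
  obtain ⟨ψ, hψ⟩ := IsSeqEndo.of_left hfg hg.2.1 hφ
  have hφinj := (hψ.bijective_of_isProjCover_of_isUnit hX hg hfg hf hns isUnit_one).1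
  refine eq_bot_iff.mpr fun q hq ↦ (Submodule.mem_bot R).mpr (hφinj ?_)
  rw [map_zero, LinearMap.comp_apply, Submodule.mkQ_apply,
    (Submodule.Quotient.mk_eq_zero N).mpr hq, map_zero]

lemma isProjCover_of_isInjEnv [Module.Projective R Q] [IsArtinian R Q] [IsArtinian R Y]
    [IsNoetherian R Y] (hY : Indecomposable R Y) (hf : IsInjEnv R f) (hfg : Exact f g)
    (hg : Surjective g) (hns : ¬∃ r : Q →ₗ[R] Y, r ∘ₗ f = LinearMap.id) : IsProjCover R g := by
  refine ⟨inferInstance, hg, fun N hN ↦ ?_⟩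
  have hgN : Surjective (g ∘ₗ N.subtype) := by
    rw [← LinearMap.range_eq_top, LinearMap.range_comp, Submodule.range_subtype,
      ← Submodule.map_comap_eq_of_surjective hg (N.map g), Submodule.comap_map_eq, hN,
      Submodule.map_top, LinearMap.range_eq_top.mpr hg]
  obtain ⟨σ, hσ⟩ := Module.projective_lifting_property (g ∘ₗ N.subtype) g hgN
  have hφ : g ∘ₗ (N.subtype ∘ₗ σ) = (1 : End R X) ∘ₗ g := by
    rw [← LinearMap.comp_assoc, hσ, Module.End.one_eq_id, LinearMap.id_comp]
  obtain ⟨α, hα⟩ := IsSeqEndo.of_right hfg hf.2.1 hφ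
  have hφsurj := (hα.bijective_of_isInjEnv_of_isUnit hY hf hfg hg hns isUnit_one).2
  refine eq_top_iff.mpr fun q _ ↦ ?_
  obtain ⟨q', rfl⟩ := hφsurj q
  exact (σ q').2

lemma indecomposable_of_isProjCover [Module.Injective R Q] [IsNoetherian R Q] [IsArtinian R Y]
    [IsArtinian R X] [IsNoetherian R X] (hX : Indecomposable R X) (hg : IsProjCover R g)
    (hfg : Exact f g) (hf : Injective f) (hns : ¬∃ r : Q →ₗ[R] Y, r ∘ₗ f = LinearMap.id) :
    Indecomposable R Y := by
  have : Nontrivial Y :=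
    not_subsingleton_iff_nontrivial.mp fun _ ↦ hns ⟨0, Subsingleton.elim _ _⟩
  refine indecomposable_of_bijective_or_bijective_one_sub fun e _ ↦ ?_
  obtain ⟨φ, hφ⟩ := Module.Injective.out f hf (f ∘ₗ e)
  obtain ⟨ψ, hψ⟩ := IsSeqEndo.of_left hfg hg.2.1 (φ := φ) (α := e) (LinearMap.ext hφ)
  rcases hX.bijective_or_isNilpotent ψ with hb | hn
  · exact Or.inl (hψ.bijective_left_of_isProjCover hg hf hb.2)
  · exact Or.inr (hψ.one_sub.bijective_left_of_isProjCover hg hf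
      ((Module.End.isUnit_iff _).mp hn.isUnit_one_sub).2)

lemma indecomposable_of_isInjEnv [Module.Projective R Q] [IsArtinian R Q] [IsNoetherian R X]
    [IsArtinian R Y] [IsNoetherian R Y] (hY : Indecomposable R Y) (hf : IsInjEnv R f)
    (hfg : Exact f g) (hg : Surjective g) (hns : ¬∃ r : Q →ₗ[R] Y, r ∘ₗ f = LinearMap.id) :
    Indecomposable R X := by
  have : Nontrivial X := by
    refine not_subsingleton_iff_nontrivial.mp fun _ ↦ hns ?_
    have hsplit := (hfg.split_tfae hf.2.1 hg).out 0 1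
    exact hsplit.mp ⟨0, Subsingleton.elim _ _⟩
  refine indecomposable_of_bijective_or_bijective_one_sub fun e _ ↦ ?_
  obtain ⟨φ, hφ⟩ := Module.projective_lifting_property g (e ∘ₗ g) hg
  obtain ⟨α, hα⟩ := IsSeqEndo.of_right hfg hf.2.1 hφ
  rcases hY.bijective_or_isNilpotent α with hb | hn
  · exact Or.inl (hα.bijective_right_of_isInjEnv hf hg hb.1)
  · exact Or.inr (hα.one_sub.bijective_right_of_isInjEnv hf hg
      ((Module.End.isUnit_iff _).mp hn.isUnit_one_sub).1)

end ProjCoverInjEnv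

theorem stmt6 (Λ : Type) [Ring Λ] (k : Type) [CommRing k] [IsArtinianRing k] [Algebra k Λ]
    [Module.Finite k Λ]
    (Y Q X : Type) [AddCommGroup Y] [Module Λ Y] [Module.Finite Λ Y]
    [AddCommGroup Q] [Module Λ Q] [Module.Finite Λ Q]
    [AddCommGroup X] [Module Λ X] [Module.Finite Λ X]
    (f : Y →ₗ[Λ] Q) (g : Q →ₗ[Λ] X)
    (hf : Injective f) (hg : Surjective g)
    (hex : LinearMap.range f = LinearMap.ker g)
    (hns : ¬∃ r : Q →ₗ[Λ] Y, r ∘ₗ f = LinearMap.id)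
    (hQ : IsProjInj Λ Q) :
    (Indecomposable Λ X ∧ IsProjCover Λ g) ↔ (Indecomposable Λ Y ∧ IsInjEnv Λ f) := by
  obtain ⟨_, _⟩ := hQ
  have hfg : Exact f g := LinearMap.exact_iff.mpr hex.symm
  -- by Hopkins–Levitzki, instance search now makes finitely generated `Λ`-modules of finite length
  have : IsArtinianRing Λ := isArtinian_of_tower k inferInstance
  constructor
  · rintro ⟨hX, hpc⟩
    exact ⟨indecomposable_of_isProjCover hX hpc hfg hf hns,
      isInjEnv_of_isProjCover hX hpc hfg hf hns⟩
  · rintro ⟨hY, hie⟩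
    exact ⟨indecomposable_of_isInjEnv hY hie hfg hg hns,
      isProjCover_of_isInjEnv hY hie hfg hg hns⟩
end
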